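/- For all natural numbers m, n with 0 ≤ m ≤ n: hom(E_1^m, E_4^n) = 0, ext1(E_1^m, E_4^n) = n − m, hom(E_4^n, E_1^m) = 1 + n − m, and ext1(E_4^n, E_1^m) = 0. For all natural numbers m, n with 0 ≤ n < m: hom(E_1^m, E_4^n) = m − n, ext1(E_1^m, E_4^n) = 0, hom(E_4^n, E_1^m) = 0, and ext1(E_4^n, E_1^m) = m − n − 1. -/

import Mathlib

noncomputable section

open Module

universe u

/-- A representation of the quiver `Q1` (vertices 1, 2, 3; arrows 1→3, 1→2, 2→3)
over the field `k`, with finite-dimensional vector spaces at the vertices. -/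
structure RepQ1 (k : Type u) [Field k] where
  V1 : Type u
  V2 : Type u
  V3 : Type u
  [acg1 : AddCommGroup V1]
  [acg2 : AddCommGroup V2]
  [acg3 : AddCommGroup V3]
  [mod1 : Module k V1]
  [mod2 : Module k V2]
  [mod3 : Module k V3]
  [fd1 : FiniteDimensional k V1]
  [fd2 : FiniteDimensional k V2]
  [fd3 : FiniteDimensional k V3]
  r13 : V1 →ₗ[k] V3
  r12 : V1 →ₗ[k] V2
  r23 : V2 →ₗ[k] V3

attribute [instance] RepQ1.acg1 RepQ1.acg2 RepQ1.acg3 RepQ1.mod1 RepQ1.mod2 RepQ1.mod3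
  RepQ1.fd1 RepQ1.fd2 RepQ1.fd3

namespace RepQ1

variable {k : Type u} [Field k]

/-- The space of morphisms of representations `ρ → ρ'`:
triples `(f₁, f₂, f₃)` of linear maps commuting with the structure maps. -/
def homSpace (ρ ρ' : RepQ1 k) :
    Submodule k ((ρ.V1 →ₗ[k] ρ'.V1) × (ρ.V2 →ₗ[k] ρ'.V2) × (ρ.V3 →ₗ[k] ρ'.V3)) where
  carrier := { f | f.2.2 ∘ₗ ρ.r13 = ρ'.r13 ∘ₗ f.1 ∧
                   f.2.1 ∘ₗ ρ.r12 = ρ'.r12 ∘ₗ f.1 ∧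
                   f.2.2 ∘ₗ ρ.r23 = ρ'.r23 ∘ₗ f.2.1 }
  add_mem' := by
    rintro f g ⟨h1, h2, h3⟩ ⟨h1', h2', h3'⟩
    refine ⟨?_, ?_, ?_⟩ <;>
      simp only [Prod.fst_add, Prod.snd_add, LinearMap.add_comp, LinearMap.comp_add,
        h1, h2, h3, h1', h2', h3']
  zero_mem' := by
    refine ⟨?_, ?_, ?_⟩ <;> simp
  smul_mem' := by
    rintro c f ⟨h1, h2, h3⟩
    refine ⟨?_, ?_, ?_⟩ <;>
      simp only [Prod.smul_fst, Prod.smul_snd, LinearMap.smul_comp, LinearMap.comp_smul,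
        h1, h2, h3]

/-- `hom ρ ρ'` is the `k`-dimension of the space of morphisms of representations `ρ → ρ'`. -/
def hom (ρ ρ' : RepQ1 k) : ℕ := finrank k (homSpace ρ ρ')

/-- The linear map `Φ` whose cokernel computes `Ext¹(ρ, ρ')`. -/
def phi (ρ ρ' : RepQ1 k) :
    ((ρ.V1 →ₗ[k] ρ'.V1) × (ρ.V2 →ₗ[k] ρ'.V2) × (ρ.V3 →ₗ[k] ρ'.V3)) →ₗ[k]
      ((ρ.V1 →ₗ[k] ρ'.V3) × (ρ.V1 →ₗ[k] ρ'.V2) × (ρ.V2 →ₗ[k] ρ'.V3)) where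
  toFun g := (g.2.2 ∘ₗ ρ.r13 - ρ'.r13 ∘ₗ g.1,
              g.2.1 ∘ₗ ρ.r12 - ρ'.r12 ∘ₗ g.1,
              g.2.2 ∘ₗ ρ.r23 - ρ'.r23 ∘ₗ g.2.1)
  map_add' g h := by
    refine Prod.ext ?_ (Prod.ext ?_ ?_) <;>
      · simp only [Prod.fst_add, Prod.snd_add, LinearMap.add_comp, LinearMap.comp_add]
        abel
  map_smul' c g := by
    refine Prod.ext ?_ (Prod.ext ?_ ?_) <;>
      simp [LinearMap.smul_comp, LinearMap.comp_smul, smul_sub]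

/-- `ext1 ρ ρ'` is the `k`-dimension of the cokernel of `Φ`; it equals
`dim Ext¹(ρ, ρ')` in the abelian category of representations of `Q1`. -/
def ext1 (ρ ρ' : RepQ1 k) : ℕ :=
  finrank k (((ρ.V1 →ₗ[k] ρ'.V3) × (ρ.V1 →ₗ[k] ρ'.V2) × (ρ.V2 →ₗ[k] ρ'.V3)) ⧸
    LinearMap.range (phi ρ ρ'))

/-- A representation is exceptional if `hom ρ ρ = 1` and `ext1 ρ ρ = 0`. -/
def IsExceptional (ρ : RepQ1 k) : Prop := hom ρ ρ = 1 ∧ ext1 ρ ρ = 0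

/-- Isomorphism of representations of `Q1`. -/
def Iso (ρ ρ' : RepQ1 k) : Prop :=
  ∃ (e1 : ρ.V1 ≃ₗ[k] ρ'.V1) (e2 : ρ.V2 ≃ₗ[k] ρ'.V2) (e3 : ρ.V3 ≃ₗ[k] ρ'.V3),
    e3.toLinearMap ∘ₗ ρ.r13 = ρ'.r13 ∘ₗ e1.toLinearMap ∧
    e2.toLinearMap ∘ₗ ρ.r12 = ρ'.r12 ∘ₗ e1.toLinearMap ∧
    e3.toLinearMap ∘ₗ ρ.r23 = ρ'.r23 ∘ₗ e2.toLinearMap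

end RepQ1

variable (k : Type u) [Field k]

/-- `π₊^m : k^{m+1} → k^m`, `(a₁,…,a_{m+1}) ↦ (a₁,…,a_m)`. -/
def piPlus (m : ℕ) : (Fin (m + 1) → k) →ₗ[k] (Fin m → k) :=
  LinearMap.funLeft k k Fin.castSucc

/-- `π₋^m : k^{m+1} → k^m`, `(a₁,…,a_{m+1}) ↦ (a₂,…,a_{m+1})`. -/
def piMinus (m : ℕ) : (Fin (m + 1) → k) →ₗ[k] (Fin m → k) :=
  LinearMap.funLeft k k Fin.succ

/-- `j₊^m : k^m → k^{m+1}`, `(a₁,…,a_m) ↦ (a₁,…,a_m,0)`. -/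
def jPlus (m : ℕ) : (Fin m → k) →ₗ[k] (Fin (m + 1) → k) where
  toFun a := Fin.snoc a 0
  map_add' a b := by
    ext i
    induction i using Fin.lastCases <;> simp
  map_smul' c a := by
    ext i
    induction i using Fin.lastCases <;> simp

/-- `j₋^m : k^m → k^{m+1}`, `(a₁,…,a_m) ↦ (0,a₁,…,a_m)`. -/
def jMinus (m : ℕ) : (Fin m → k) →ₗ[k] (Fin (m + 1) → k) where
  toFun a := Fin.cons 0 a
  map_add' a b := by
    ext i
    induction i using Fin.cases <;> simp
  map_smul' c a := by
    ext i
    induction i using Fin.cases <;> simp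

/-- The representation `E₁^m = (k^{m+1}, k^m, k^m)` with `ρ₁₃ = π₊^m`, `ρ₁₂ = π₋^m`, `ρ₂₃ = id`. -/
def E1 (m : ℕ) : RepQ1 k where
  V1 := Fin (m + 1) → k
  V2 := Fin m → k
  V3 := Fin m → k
  r13 := piPlus k m
  r12 := piMinus k m
  r23 := LinearMap.id

/-- The representation `E₂^m = (k^m, k^{m+1}, k^{m+1})` with `ρ₁₃ = j₊^m`, `ρ₁₂ = j₋^m`, `ρ₂₃ = id`. -/
def E2 (m : ℕ) : RepQ1 k where
  V1 := Fin m → k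
  V2 := Fin (m + 1) → k
  V3 := Fin (m + 1) → k
  r13 := jPlus k m
  r12 := jMinus k m
  r23 := LinearMap.id

/-- The representation `E₃^m = (k^m, k^m, k^{m+1})` with `ρ₁₃ = j₊^m`, `ρ₁₂ = id`, `ρ₂₃ = j₋^m`. -/
def E3 (m : ℕ) : RepQ1 k where
  V1 := Fin m → k
  V2 := Fin m → k
  V3 := Fin (m + 1) → k
  r13 := jPlus k m
  r12 := LinearMap.id
  r23 := jMinus k m

/-- The representation `E₄^m = (k^{m+1}, k^{m+1}, k^m)` with `ρ₁₃ = π₊^m`, `ρ₁₂ = id`, `ρ₂₃ = π₋^m`. -/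
def E4 (m : ℕ) : RepQ1 k where
  V1 := Fin (m + 1) → k
  V2 := Fin (m + 1) → k
  V3 := Fin m → k
  r13 := piPlus k m
  r12 := LinearMap.id
  r23 := piMinus k m

/-- The representation `M = (0, k, 0)` with zero structure maps. -/
def Mrep : RepQ1 k where
  V1 := Fin 0 → k
  V2 := Fin 1 → k
  V3 := Fin 0 → k
  r13 := 0
  r12 := 0
  r23 := 0

/-- The representation `M' = (k, 0, k)` with `ρ₁₃ = id` and the other structure maps zero. -/
def Mprep : RepQ1 k where
  V1 := Fin 1 → k
  V2 := Fin 0 → k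
  V3 := Fin 1 → k
  r13 := LinearMap.id
  r12 := 0
  r23 := 0

namespace RepQ1

variable {k : Type u} [Field k]

/-- An exceptional pair `(X, Y)`: both `X` and `Y` are exceptional and
`hom (Y, X) = 0` and `ext1 (Y, X) = 0`. -/
def IsExceptionalPair (X Y : RepQ1 k) : Prop :=
  X.IsExceptional ∧ Y.IsExceptional ∧ hom Y X = 0 ∧ ext1 Y X = 0

/-- An exceptional triple `(A, B, C)`: `(A,B)`, `(B,C)` and `(A,C)` are exceptional pairs. -/
def IsExceptionalTriple (A B C : RepQ1 k) : Prop :=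
  IsExceptionalPair A B ∧ IsExceptionalPair B C ∧ IsExceptionalPair A C

/-- A morphism of representations of `Q1`. -/
structure Homo (ρ ρ' : RepQ1 k) where
  f1 : ρ.V1 →ₗ[k] ρ'.V1
  f2 : ρ.V2 →ₗ[k] ρ'.V2
  f3 : ρ.V3 →ₗ[k] ρ'.V3
  comm13 : f3 ∘ₗ ρ.r13 = ρ'.r13 ∘ₗ f1
  comm12 : f2 ∘ₗ ρ.r12 = ρ'.r12 ∘ₗ f1
  comm23 : f3 ∘ₗ ρ.r23 = ρ'.r23 ∘ₗ f2

/-- `0 → A → C → B → 0` is a short exact sequence of representations of `Q1`: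
at each vertex the induced sequence of vector spaces is short exact. -/
def IsSES {A C B : RepQ1 k} (f : Homo A C) (g : Homo C B) : Prop :=
  Function.Injective f.f1 ∧ Function.Injective f.f2 ∧ Function.Injective f.f3 ∧
  Function.Surjective g.f1 ∧ Function.Surjective g.f2 ∧ Function.Surjective g.f3 ∧
  LinearMap.range f.f1 = LinearMap.ker g.f1 ∧
  LinearMap.range f.f2 = LinearMap.ker g.f2 ∧
  LinearMap.range f.f3 = LinearMap.ker g.f3

/-- A representation is zero when all its vector spaces are zero. -/
def IsZeroRep (ρ : RepQ1 k) : Prop :=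
  Subsingleton ρ.V1 ∧ Subsingleton ρ.V2 ∧ Subsingleton ρ.V3

end RepQ1

/-- The (vertexwise) direct sum of two representations of `Q1`. -/
def RepQ1.dsum {k : Type u} [Field k] (ρ σ : RepQ1 k) : RepQ1 k where
  V1 := ρ.V1 × σ.V1
  V2 := ρ.V2 × σ.V2
  V3 := ρ.V3 × σ.V3
  r13 := ρ.r13.prodMap σ.r13
  r12 := ρ.r12.prodMap σ.r12
  r23 := ρ.r23.prodMap σ.r23

/-!
The Euler form of `Q1` gives `hom ρ ρ' - ext1 ρ ρ' = ∑ᵢ dᵢ d'ᵢ - ∑_{i → j} dᵢ d'ⱼ`, which equals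
`m - n` for `(E₁^m, E₄^n)` and `n + 1 - m` for `(E₄^n, E₁^m)`. So it suffices to bound `hom` from
above by these numbers, truncated at `0`. A morphism is determined by one matrix (that of `f₂`,
resp. `f₁`), and the commutation relations with `π₊` and `π₋` force it to be constant along
diagonals, zero below the main diagonal, and zero in its first row beyond the first `m - n`
(resp. `n + 1 - m`) entries; these entries therefore determine the morphism.
-/

variable {k}

theorem eq_zero_of_shift_invariant {α : Type*} [Zero α] (M : ℕ → ℕ → α) {p a : ℕ}
    (hshift : ∀ i < p, ∀ j, M (i + 1) (j + 1) = M i j)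
    (hcol : ∀ i < p, M (i + 1) 0 = 0)
    (hlast : ∀ j, a ≤ j → M p j = 0)
    (hrow : ∀ j, j + p < a → M 0 j = 0) :
    ∀ i ≤ p, ∀ j, M i j = 0 := by
  have hdiag : ∀ i ≤ p, ∀ j, M i (j + i) = M 0 j := by
    intro i
    induction i with
    | zero => simp
    | succ i ih =>
      intro hi j
      rw [← add_assoc, hshift i (by omega), ih (by omega)]
  have hrow' : ∀ j, M 0 j = 0 := fun j => by
    by_cases hj : j + p < a
    · exact hrow j hj
    · rw [← hdiag p le_rfl j, hlast _ (by omega)]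
  intro i
  induction i with
  | zero => exact fun _ => hrow'
  | succ i ih =>
    rintro hi (_ | j)
    · exact hcol i (by omega)
    · rw [hshift i (by omega), ih (by omega)]

section Coordinates

variable {a b : ℕ}

theorem piPlus_single_castSucc (j : Fin a) (x : k) :
    piPlus k a (Pi.single j.castSucc x) = Pi.single j x := by
  funext l
  simp [piPlus, LinearMap.funLeft_apply, Pi.single_apply]

theorem piPlus_single_last (x : k) : piPlus k a (Pi.single (Fin.last a) x) = 0 := by
  funext l
  simp [piPlus, LinearMap.funLeft_apply, Fin.castSucc_ne_last]

theorem piMinus_single_succ (j : Fin a) (x : k) :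
    piMinus k a (Pi.single j.succ x) = Pi.single j x := by
  funext l
  simp [piMinus, LinearMap.funLeft_apply, Pi.single_apply]

theorem piMinus_single_zero (x : k) : piMinus k a (Pi.single 0 x) = 0 := by
  funext l
  simp [piMinus, LinearMap.funLeft_apply, Fin.succ_ne_zero]

/-- Matrix entries indexed by naturals and set to `0` outside the matrix, so that shifting
indices needs no side conditions. -/
def natEntry (i j : ℕ) : ((Fin a → k) →ₗ[k] (Fin b → k)) →ₗ[k] k :=
  if h : i < b ∧ j < a then
    LinearMap.proj ⟨i, h.1⟩ ∘ₗ LinearMap.applyₗ (Pi.single ⟨j, h.2⟩ 1)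
  else 0

theorem natEntry_of_lt {i j : ℕ} (hi : i < b) (hj : j < a) (g : (Fin a → k) →ₗ[k] (Fin b → k)) :
    natEntry i j g = g (Pi.single ⟨j, hj⟩ 1) ⟨i, hi⟩ := by
  simp [natEntry, hi, hj]

theorem natEntry_of_not_lt {i j : ℕ} (h : ¬ (i < b ∧ j < a))
    (g : (Fin a → k) →ₗ[k] (Fin b → k)) : natEntry i j g = 0 := by
  simp [natEntry, h]

theorem eq_zero_of_natEntry {g : (Fin a → k) →ₗ[k] (Fin b → k)}
    (h : ∀ i j, natEntry i j g = 0) : g = 0 := by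
  refine (Pi.basisFun k (Fin a)).ext fun j => funext fun i => ?_
  simpa [natEntry_of_lt i.isLt j.isLt] using h i j

theorem eq_zero_of_natEntry_of_le {p : ℕ} {g : (Fin a → k) →ₗ[k] (Fin (p + 1) → k)}
    (h : ∀ i ≤ p, ∀ j, natEntry i j g = 0) : g = 0 :=
  eq_zero_of_natEntry fun i j => by
    by_cases hi : i ≤ p
    · exact h i hi j
    · exact natEntry_of_not_lt (by omega) g

theorem natEntry_piPlus_comp {i : ℕ} (hi : i < b) (j : ℕ)
    (g : (Fin a → k) →ₗ[k] (Fin (b + 1) → k)) :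
    natEntry i j (piPlus k b ∘ₗ g) = natEntry i j g := by
  by_cases hj : j < a
  · simp [natEntry_of_lt hi hj, natEntry_of_lt (Nat.lt_succ_of_lt hi) hj, piPlus]
  · simp [natEntry_of_not_lt, hj]

theorem natEntry_piMinus_comp {i : ℕ} (hi : i < b) (j : ℕ)
    (g : (Fin a → k) →ₗ[k] (Fin (b + 1) → k)) :
    natEntry i j (piMinus k b ∘ₗ g) = natEntry (i + 1) j g := by
  by_cases hj : j < a
  · simp [natEntry_of_lt hi hj, natEntry_of_lt (Nat.succ_lt_succ hi) hj, piMinus]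
  · simp [natEntry_of_not_lt, hj]

theorem natEntry_comp_piPlus (i j : ℕ) (g : (Fin a → k) →ₗ[k] (Fin b → k)) :
    natEntry i j (g ∘ₗ piPlus k a) = natEntry i j g := by
  by_cases hi : i < b
  · rcases lt_trichotomy j a with hj | rfl | hj
    · rw [natEntry_of_lt hi (Nat.lt_succ_of_lt hj), natEntry_of_lt hi hj]
      exact congrArg (g · ⟨i, hi⟩) (piPlus_single_castSucc ⟨j, hj⟩ 1)
    · rw [natEntry_of_lt hi (Nat.lt_succ_self j), natEntry_of_not_lt (by omega)]
      show g (piPlus k j (Pi.single (Fin.last j) 1)) ⟨i, hi⟩ = 0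
      simp [piPlus_single_last]
    · rw [natEntry_of_not_lt (by omega), natEntry_of_not_lt (by omega)]
  · rw [natEntry_of_not_lt (by omega), natEntry_of_not_lt (by omega)]

theorem natEntry_comp_piMinus_succ (i j : ℕ) (g : (Fin a → k) →ₗ[k] (Fin b → k)) :
    natEntry i (j + 1) (g ∘ₗ piMinus k a) = natEntry i j g := by
  by_cases h : i < b ∧ j < a
  · rw [natEntry_of_lt h.1 (Nat.succ_lt_succ h.2), natEntry_of_lt h.1 h.2]
    exact congrArg (g · ⟨i, h.1⟩) (piMinus_single_succ ⟨j, h.2⟩ 1)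
  · rw [natEntry_of_not_lt (by omega), natEntry_of_not_lt h]

theorem natEntry_comp_piMinus_zero (i : ℕ) (g : (Fin a → k) →ₗ[k] (Fin b → k)) :
    natEntry i 0 (g ∘ₗ piMinus k a) = 0 := by
  by_cases hi : i < b
  · simpa [natEntry_of_lt hi (Nat.succ_pos a)] using
      congrArg (g · ⟨i, hi⟩) (piMinus_single_zero (a := a) (1 : k))
  · rw [natEntry_of_not_lt (by omega)]

def firstRow (d : ℕ) : ((Fin a → k) →ₗ[k] (Fin b → k)) →ₗ[k] (Fin d → k) :=
  LinearMap.pi fun t => natEntry 0 t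

theorem natEntry_eq_zero_of_firstRow {d : ℕ} {g : (Fin a → k) →ₗ[k] (Fin b → k)}
    (h : firstRow d g = 0) {j : ℕ} (hj : j < d) : natEntry 0 j g = 0 :=
  congrFun h ⟨j, hj⟩

end Coordinates

theorem eq_zero_of_piMinus_comp_comp_piPlus {m n : ℕ} {g : (Fin m → k) →ₗ[k] (Fin (n + 1) → k)}
    (hg : (piMinus k n ∘ₗ g) ∘ₗ piPlus k m = piPlus k n ∘ₗ g ∘ₗ piMinus k m)
    (hrow : firstRow (m - n) g = 0) : g = 0 := by
  refine eq_zero_of_natEntry_of_le <|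
    eq_zero_of_shift_invariant (fun i j => natEntry i j g) (a := m) ?_ ?_ ?_ ?_
  · intro i hi j
    rw [← natEntry_piMinus_comp hi, ← natEntry_comp_piPlus, hg, natEntry_piPlus_comp hi,
      natEntry_comp_piMinus_succ]
  · intro i hi
    rw [← natEntry_piMinus_comp hi, ← natEntry_comp_piPlus, hg, natEntry_piPlus_comp hi,
      natEntry_comp_piMinus_zero]
  · exact fun j hj => natEntry_of_not_lt (by omega) g
  · exact fun j hj => natEntry_eq_zero_of_firstRow hrow (by omega)

theorem eq_zero_of_comp_piPlus_of_comp_piMinus {m n : ℕ}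
    {f1 : (Fin (n + 1) → k) →ₗ[k] (Fin (m + 1) → k)} {f3 : (Fin n → k) →ₗ[k] (Fin m → k)}
    (h13 : f3 ∘ₗ piPlus k n = piPlus k m ∘ₗ f1) (h23 : f3 ∘ₗ piMinus k n = piMinus k m ∘ₗ f1)
    (hrow : firstRow (n + 1 - m) f1 = 0) : f1 = 0 ∧ f3 = 0 := by
  have h3 : ∀ i < m, ∀ j, natEntry i j f3 = natEntry i j f1 := fun i hi j => by
    rw [← natEntry_comp_piPlus, h13, natEntry_piPlus_comp hi]
  have h1 : ∀ i ≤ m, ∀ j, natEntry i j f1 = 0 := by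
    refine eq_zero_of_shift_invariant (fun i j => natEntry i j f1) (a := n + 1) ?_ ?_ ?_ ?_
    · intro i hi j
      rw [← natEntry_piMinus_comp hi, ← h23, natEntry_comp_piMinus_succ, h3 i hi]
    · intro i hi
      rw [← natEntry_piMinus_comp hi, ← h23, natEntry_comp_piMinus_zero]
    · exact fun j hj => natEntry_of_not_lt (by omega) f1
    · exact fun j hj => natEntry_eq_zero_of_firstRow hrow (by omega)
  refine ⟨eq_zero_of_natEntry_of_le h1, eq_zero_of_natEntry fun i j => ?_⟩
  by_cases hi : i < m
  · rw [h3 i hi, h1 i hi.le]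
  · exact natEntry_of_not_lt (by omega) f3

theorem Submodule.finrank_le_of_forall_eq_zero {V W : Type*} [AddCommGroup V] [Module k V]
    [AddCommGroup W] [Module k W] [FiniteDimensional k W] {S : Submodule k V} (L : V →ₗ[k] W)
    (h : ∀ v ∈ S, L v = 0 → v = 0) : finrank k S ≤ finrank k W := by
  refine LinearMap.finrank_le_finrank_of_injective (f := L.domRestrict S) ?_
  rw [← LinearMap.ker_eq_bot, LinearMap.ker_eq_bot']
  exact fun v hv => Subtype.ext (h v v.2 hv)

namespace RepQ1

theorem homSpace_eq_ker (ρ ρ' : RepQ1 k) : homSpace ρ ρ' = LinearMap.ker (phi ρ ρ') := by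
  ext f
  simp [homSpace, phi, sub_eq_zero]

theorem ext1_add_eulerSum (ρ ρ' : RepQ1 k) :
    ext1 ρ ρ' + (finrank k ρ.V1 * finrank k ρ'.V1 + finrank k ρ.V2 * finrank k ρ'.V2 +
      finrank k ρ.V3 * finrank k ρ'.V3) =
    hom ρ ρ' + (finrank k ρ.V1 * finrank k ρ'.V3 + finrank k ρ.V1 * finrank k ρ'.V2 +
      finrank k ρ.V2 * finrank k ρ'.V3) := by
  have hquot := (LinearMap.range (phi ρ ρ')).finrank_quotient_add_finrank
  have hrank := LinearMap.finrank_range_add_finrank_ker (phi ρ ρ')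
  simp only [finrank_prod, finrank_linearMap] at hquot hrank
  rw [ext1, hom, homSpace_eq_ker]
  linarith

end RepQ1

theorem finrank_E1 (m : ℕ) :
    finrank k (E1 k m).V1 = m + 1 ∧ finrank k (E1 k m).V2 = m ∧ finrank k (E1 k m).V3 = m :=
  ⟨finrank_fin_fun k, finrank_fin_fun k, finrank_fin_fun k⟩

theorem finrank_E4 (n : ℕ) :
    finrank k (E4 k n).V1 = n + 1 ∧ finrank k (E4 k n).V2 = n + 1 ∧ finrank k (E4 k n).V3 = n :=
  ⟨finrank_fin_fun k, finrank_fin_fun k, finrank_fin_fun k⟩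

theorem ext1_E1_E4_add (m n : ℕ) :
    RepQ1.ext1 (E1 k m) (E4 k n) + m = RepQ1.hom (E1 k m) (E4 k n) + n := by
  have h := RepQ1.ext1_add_eulerSum (E1 k m) (E4 k n)
  obtain ⟨h1, h2, h3⟩ := finrank_E1 (k := k) m
  obtain ⟨h1', h2', h3'⟩ := finrank_E4 (k := k) n
  rw [h1, h2, h3, h1', h2', h3'] at h
  linarith

theorem ext1_E4_E1_add (m n : ℕ) :
    RepQ1.ext1 (E4 k n) (E1 k m) + (n + 1) = RepQ1.hom (E4 k n) (E1 k m) + m := by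
  have h := RepQ1.ext1_add_eulerSum (E4 k n) (E1 k m)
  obtain ⟨h1, h2, h3⟩ := finrank_E1 (k := k) m
  obtain ⟨h1', h2', h3'⟩ := finrank_E4 (k := k) n
  rw [h1, h2, h3, h1', h2', h3'] at h
  linarith

theorem hom_E1_E4_le (m n : ℕ) : RepQ1.hom (E1 k m) (E4 k n) ≤ m - n := by
  refine (Submodule.finrank_le_of_forall_eq_zero (S := RepQ1.homSpace (E1 k m) (E4 k n))
    (firstRow (m - n) ∘ₗ LinearMap.fst k ((E1 k m).V2 →ₗ[k] (E4 k n).V2) _ ∘ₗ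
      LinearMap.snd k ((E1 k m).V1 →ₗ[k] (E4 k n).V1) _) ?_).trans_eq (finrank_fin_fun k)
  rintro ⟨f1, g, f3⟩ ⟨h13, h12, h23⟩ hrow
  change f3 ∘ₗ piPlus k m = piPlus k n ∘ₗ f1 at h13
  change g ∘ₗ piMinus k m = LinearMap.id ∘ₗ f1 at h12
  change f3 ∘ₗ LinearMap.id = piMinus k n ∘ₗ g at h23
  rw [LinearMap.id_comp] at h12
  rw [LinearMap.comp_id] at h23
  subst h12 h23
  obtain rfl : g = 0 := eq_zero_of_piMinus_comp_comp_piPlus h13 hrow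
  exact Prod.ext (LinearMap.zero_comp _) (Prod.ext rfl (LinearMap.comp_zero _))

theorem hom_E4_E1_le (m n : ℕ) : RepQ1.hom (E4 k n) (E1 k m) ≤ n + 1 - m := by
  refine (Submodule.finrank_le_of_forall_eq_zero (S := RepQ1.homSpace (E4 k n) (E1 k m))
    (firstRow (n + 1 - m) ∘ₗ LinearMap.fst k ((E4 k n).V1 →ₗ[k] (E1 k m).V1) _) ?_).trans_eq
    (finrank_fin_fun k)
  rintro ⟨f1, f2, f3⟩ ⟨h13, h12, h23⟩ hrow
  change f3 ∘ₗ piPlus k n = piPlus k m ∘ₗ f1 at h13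
  change f2 ∘ₗ LinearMap.id = piMinus k m ∘ₗ f1 at h12
  change f3 ∘ₗ piMinus k n = LinearMap.id ∘ₗ f2 at h23
  rw [LinearMap.comp_id] at h12
  rw [LinearMap.id_comp, h12] at h23
  obtain ⟨rfl, rfl⟩ := eq_zero_of_comp_piPlus_of_comp_piMinus h13 h23 hrow
  exact Prod.ext rfl (Prod.ext (h12.trans (LinearMap.comp_zero _)) rfl)

theorem statement_4_general (k : Type u) [Field k] :
    (∀ m n : ℕ, m ≤ n →
      RepQ1.hom (E1 k m) (E4 k n) = 0 ∧
      RepQ1.ext1 (E1 k m) (E4 k n) = n - m ∧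
      RepQ1.hom (E4 k n) (E1 k m) = 1 + n - m ∧
      RepQ1.ext1 (E4 k n) (E1 k m) = 0) ∧
    (∀ m n : ℕ, n < m →
      RepQ1.hom (E1 k m) (E4 k n) = m - n ∧
      RepQ1.ext1 (E1 k m) (E4 k n) = 0 ∧
      RepQ1.hom (E4 k n) (E1 k m) = 0 ∧
      RepQ1.ext1 (E4 k n) (E1 k m) = m - n - 1) := by
  refine ⟨fun m n _ => ?_, fun m n _ => ?_⟩ <;>
  · have := hom_E1_E4_le (k := k) m n
    have := hom_E4_E1_le (k := k) m n
    have := ext1_E1_E4_add (k := k) m n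
    have := ext1_E4_E1_add (k := k) m n
    omega

/-- `hom`/`ext1` dimensions between `E₁^m` and `E₄^n`. -/
theorem statement_4 (k : Type u) [Field k] [IsAlgClosed k] :
    (∀ m n : ℕ, m ≤ n →
      RepQ1.hom (E1 k m) (E4 k n) = 0 ∧
      RepQ1.ext1 (E1 k m) (E4 k n) = n - m ∧
      RepQ1.hom (E4 k n) (E1 k m) = 1 + n - m ∧
      RepQ1.ext1 (E4 k n) (E1 k m) = 0) ∧
    (∀ m n : ℕ, n < m →
      RepQ1.hom (E1 k m) (E4 k n) = m - n ∧
      RepQ1.ext1 (E1 k m) (E4 k n) = 0 ∧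
      RepQ1.hom (E4 k n) (E1 k m) = 0 ∧
      RepQ1.ext1 (E4 k n) (E1 k m) = m - n - 1) :=
  statement_4_general k
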